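/- arXiv:2203.13521 — 2 statements merged into one kernel-verified Lean document; each statement's English description precedes it below -/
import Mathlib

section
/- Let d ≥ 1 and let X : [0,1] → ℝ^d be a continuously differentiable path. Then the set A of real-valued functions on continuously differentiable paths of the form X ↦ Σ_I w_I S^{(I)}(X), where the sum runs over finitely many multi-indices I with entries in {1,…,d} (including the empty multi-index) and w_I ∈ ℝ, is closed under pointwise multiplication: if f(X) = Σ_I v_I S^{(I)}(X) and g(X) = Σ_J w_J S^{(J)}(X) are two such finite linear combinations, then the pointwise product X ↦ f(X)·g(X) is again a finite linear combination of iterated integrals, namely f(X)g(X) = Σ_{I,J} v_I w_J Σ_{A} S^{(w_A)}(X), where for each pair (I,J) with |I| = p, |J| = q the inner sum runs over subsets A ⊆ {1,…,p+q} with |A| = p and w_A denotes the interleaving of I and J determined by A. -/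
/-!
Index the coordinates of `Δ_p × Δ_q` by `Fin p ⊕ Fin q`. Off the null set where two coordinates
coincide, the coordinates can be listed in increasing order in exactly one way, and that order is a
shuffle: an equivalence `Fin p ⊕ Fin q ≃ Fin (p + q)` increasing on each summand, determined by the
set `A` of positions taken by the first block. So `Δ_p × Δ_q` is, up to a null set, the disjoint
union of one cell per `A`; reordering the coordinates preserves Lebesgue measure and turns the
cell into `Δ_{p+q}` and the integrand of `S^{(I)} S^{(J)}` into that of `S^{(w_A)}`.
-/

open MeasureTheory

/-- The open ordered simplex `{ t : Fin n → ℝ | a < t 0 < t 1 < ⋯ < t (n-1) < b }`. -/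
def orderedSimplex (a b : ℝ) (n : ℕ) : Set (Fin n → ℝ) :=
  {t | (∀ i, a < t i ∧ t i < b) ∧ ∀ i j : Fin n, i < j → t i < t j}

/-- The iterated integral `S^{(i₁⋯iₙ)}_{[a,b]}(X)` of a path `X : ℝ → ℝ^d`.
For `n = 0` this is automatically `1`. -/
noncomputable def sig {d : ℕ} (X : ℝ → Fin d → ℝ) (a b : ℝ) {n : ℕ}
    (idx : Fin n → Fin d) : ℝ :=
  ∫ t in orderedSimplex a b n, ∏ i, deriv (fun u => X u (idx i)) (t i)

/-- The interleaving `w_A` of the multi-indices `I` (length `p`) and `J` (length `q`)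
determined by a subset `A ⊆ {1,…,p+q}` of cardinality `p`: the entries at the
positions of `A`, read in increasing order, are those of `I`, and the entries at the
positions of the complement of `A`, read in increasing order, are those of `J`. -/
def interleave {d p q : ℕ} (I : Fin p → Fin d) (J : Fin q → Fin d)
    (A : Finset (Fin (p + q))) (hA : A.card = p) : Fin (p + q) → Fin d :=
  fun m =>
    if hm : m ∈ A then
      I ⟨(A.filter (fun x => x < m)).card, by
        have h2 : (A.filter (fun x => x < m)).card < A.card :=
          Finset.card_lt_card ⟨Finset.filter_subset _ _,
            fun hsub => by simpa using hsub hm⟩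
        omega⟩
    else
      J ⟨(Aᶜ.filter (fun x => x < m)).card, by
        have hAc : Aᶜ.card = q := by
          have h1 := Finset.card_compl A
          simp only [Fintype.card_fin, hA] at h1
          omega
        have h2 : (Aᶜ.filter (fun x => x < m)).card < Aᶜ.card :=
          Finset.card_lt_card ⟨Finset.filter_subset _ _,
            fun hsub => by simpa using hsub (Finset.mem_compl.mpr hm)⟩
        omega⟩

/-- The iterated integral over `[0,1]` indexed by a multi-index given as a
list (word) over `{1,…,d}`. -/
noncomputable def sigL {d : ℕ} (X : ℝ → Fin d → ℝ) (I : List (Fin d)) : ℝ :=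
  sig X 0 1 I.get

open Finset

lemma isOpen_orderedSimplex (a b : ℝ) (n : ℕ) : IsOpen (orderedSimplex a b n) := by
  simp only [orderedSimplex, Set.ofPred_and, Set.ofPred_forall]
  exact .inter
    (isOpen_iInter_of_finite fun i =>
      (isOpen_lt continuous_const (continuous_apply i)).inter
        (isOpen_lt (continuous_apply i) continuous_const))
    (isOpen_iInter_of_finite fun i => isOpen_iInter_of_finite fun j =>
      isOpen_iInter_of_finite fun _ => isOpen_lt (continuous_apply i) (continuous_apply j))

lemma comp_mem_orderedSimplex {a b : ℝ} {m n : ℕ} {u : Fin n → ℝ}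
    (hu : u ∈ orderedSimplex a b n) {g : Fin m → Fin n} (hg : StrictMono g) :
    u ∘ g ∈ orderedSimplex a b m :=
  ⟨fun i => hu.1 (g i), fun _ _ hij => hu.2 _ _ (hg hij)⟩

section Sorting

variable {κ β : Type*} [LinearOrder β] {n : ℕ} {y : κ → β}

lemma exists_equiv_strictMono_comp [Fintype κ] (hy : Function.Injective y)
    (hn : Fintype.card κ = n) : ∃ σ : Fin n ≃ κ, StrictMono (y ∘ σ) := by
  let e := (Fintype.equivFinOfCardEq hn).symm
  exact ⟨(Tuple.sort (y ∘ e)).trans e, (Tuple.monotone_sort (y ∘ e)).strictMono_of_injective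
    (hy.comp (e.injective.comp (Tuple.sort _).injective))⟩

lemma eq_of_strictMono_comp {σ τ : Fin n ≃ κ} (hσ : StrictMono (y ∘ σ))
    (hτ : StrictMono (y ∘ τ)) : σ = τ := by
  have hyστ : y ∘ σ = y ∘ τ :=
    (hσ.range_inj hτ).mp (by simp only [Set.range_comp, Equiv.range_eq_univ])
  ext i
  have h : (y ∘ σ) i = (y ∘ σ) (σ.symm (τ i)) := by simpa using congrFun hyστ i
  simpa using congrArg σ (hσ.injective h)

lemma strictMono_symm_comp {α : Type*} [Preorder α] {σ : Fin n ≃ κ} (hσ : StrictMono (y ∘ σ))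
    {g : α → κ} (hg : StrictMono (y ∘ g)) : StrictMono (σ.symm ∘ g) :=
  fun _ _ hij => hσ.lt_iff_lt.mp (by simpa using hg hij)

end Sorting

lemma Finset.card_filter_lt_orderEmbOfFin {α : Type*} [LinearOrder α] (s : Finset α) {k : ℕ}
    (h : #s = k) (i : Fin k) : #{x ∈ s | x < s.orderEmbOfFin h i} = i := by
  have : {x ∈ s | x < s.orderEmbOfFin h i} = (Iio i).map (s.orderEmbOfFin h).toEmbedding := by
    ext x
    simp only [mem_filter, mem_map, mem_Iio, RelEmbedding.coe_toEmbedding]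
    constructor
    · rintro ⟨hx, hlt⟩
      obtain ⟨j, rfl⟩ : x ∈ Set.range (s.orderEmbOfFin h) := by rwa [range_orderEmbOfFin]
      exact ⟨j, (s.orderEmbOfFin h).lt_iff_lt.mp hlt, rfl⟩
    · rintro ⟨j, hj, rfl⟩
      exact ⟨orderEmbOfFin_mem s h j, (s.orderEmbOfFin h).lt_iff_lt.mpr hj⟩
  rw [this, card_map, Fin.card_Iio]

section Shuffle

variable {p q : ℕ} {A : Finset (Fin (p + q))}

lemma card_compl_of_card_eq (hA : #A = p) : #Aᶜ = q := by
  rw [card_compl, Fintype.card_fin, hA, Nat.add_sub_cancel_left]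

def shuffleEquiv (hA : #A = p) : Fin p ⊕ Fin q ≃ Fin (p + q) :=
  finSumEquivOfFinset hA (card_compl_of_card_eq hA)

lemma strictMono_shuffleEquiv_inl (hA : #A = p) : StrictMono (shuffleEquiv hA ∘ Sum.inl) :=
  (A.orderEmbOfFin hA).strictMono

lemma strictMono_shuffleEquiv_inr (hA : #A = p) : StrictMono (shuffleEquiv hA ∘ Sum.inr) :=
  (Aᶜ.orderEmbOfFin (card_compl_of_card_eq hA)).strictMono

lemma exists_eq_shuffleEquiv {e : Fin p ⊕ Fin q ≃ Fin (p + q)} (hl : StrictMono (e ∘ Sum.inl))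
    (hr : StrictMono (e ∘ Sum.inr)) : ∃ (A : Finset (Fin (p + q))) (hA : #A = p),
      e = shuffleEquiv hA := by
  have hA : #(univ.image (e ∘ Sum.inl)) = p := by
    rw [card_image_of_injective _ hl.injective, card_univ, Fintype.card_fin]
  refine ⟨_, hA, Equiv.ext fun k => ?_⟩
  rcases k with i | j
  · exact congrFun (orderEmbOfFin_unique hA (fun i => mem_image_of_mem _ (mem_univ i)) hl) i
  · refine congrFun (orderEmbOfFin_unique (card_compl_of_card_eq hA) (fun j => ?_) hr) j
    simp [e.injective.eq_iff]

lemma shuffleEquiv_injective {B : Finset (Fin (p + q))} (hA : #A = p) (hB : #B = p)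
    (h : shuffleEquiv (q := q) hA = shuffleEquiv hB) : A = B := by
  rw [← image_orderEmbOfFin_univ A hA, ← image_orderEmbOfFin_univ B hB]
  exact congrArg (fun e : Fin p ⊕ Fin q ≃ Fin (p + q) => univ.image (e ∘ Sum.inl)) h

lemma interleave_shuffleEquiv {d : ℕ} (I : Fin p → Fin d) (J : Fin q → Fin d) (hA : #A = p)
    (k : Fin p ⊕ Fin q) : interleave I J A hA (shuffleEquiv hA k) = Sum.elim I J k := by
  rcases k with i | j
  · have hmem : shuffleEquiv hA (.inl i) ∈ A := orderEmbOfFin_mem A hA i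
    simp only [interleave, dif_pos hmem, Sum.elim_inl]
    exact congrArg I (Fin.ext (card_filter_lt_orderEmbOfFin A hA i))
  · have hmem : shuffleEquiv hA (.inr j) ∈ Aᶜ :=
      orderEmbOfFin_mem Aᶜ (card_compl_of_card_eq hA) j
    simp only [interleave, dif_neg (mem_compl.mp hmem), Sum.elim_inr]
    exact congrArg J (Fin.ext (card_filter_lt_orderEmbOfFin Aᶜ (card_compl_of_card_eq hA) j))

lemma interleave_eq_comp_symm {d : ℕ} (I : Fin p → Fin d) (J : Fin q → Fin d) (hA : #A = p) :
    interleave I J A hA = Sum.elim I J ∘ (shuffleEquiv hA).symm := by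
  funext m
  simpa using interleave_shuffleEquiv I J hA ((shuffleEquiv hA).symm m)

end Shuffle

lemma volume_setOf_not_injective (κ : Type*) [Fintype κ] :
    volume {y : κ → ℝ | ¬ Function.Injective y} = 0 := by
  classical
  have hdiag : ∀ k k' : κ, k ≠ k' → volume {y : κ → ℝ | y k = y k'} = 0 := by
    intro k k' hne
    let L : (κ → ℝ) →ₗ[ℝ] ℝ :=
      LinearMap.proj (R := ℝ) (φ := fun _ : κ => ℝ) k - LinearMap.proj k'
    have hker : {y : κ → ℝ | y k = y k'} = (LinearMap.ker L : Set (κ → ℝ)) := by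
      ext y
      simp [L, sub_eq_zero]
    rw [hker]
    refine Measure.addHaar_submodule _ _ fun htop => ?_
    have h : Pi.single k (1 : ℝ) ∈ LinearMap.ker L := htop ▸ Submodule.mem_top
    simp [L, hne.symm] at h
  have hcover : {y : κ → ℝ | ¬ Function.Injective y} =
      ⋃ k, ⋃ k', ⋃ (_ : k ≠ k'), {y : κ → ℝ | y k = y k'} := by
    ext y
    simp [Function.Injective, and_comm]
  rw [hcover]
  exact measure_iUnion_null fun k => measure_iUnion_null fun k' =>
    measure_iUnion_null fun hne => hdiag k k' hne

lemma setIntegral_preimage_comp_equiv_symm {κ ι : Type*} [Fintype κ] [Fintype ι] (e : κ ≃ ι)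
    (S : Set (ι → ℝ)) (F : (κ → ℝ) → ℝ) :
    ∫ y in {y | y ∘ e.symm ∈ S}, F y = ∫ u in S, F (u ∘ e) := by
  have hΦ : ⇑(MeasurableEquiv.piCongrLeft (fun _ : ι => ℝ) e) = fun y => y ∘ e.symm :=
    funext fun y => funext fun i => by
      simpa [MeasurableEquiv.coe_piCongrLeft] using
        Equiv.piCongrLeft_apply_apply (fun _ : ι => ℝ) e y (e.symm i)
  have h := (volume_measurePreserving_piCongrLeft (fun _ : ι => ℝ) e).setIntegral_preimage_emb
    (MeasurableEquiv.measurableEmbedding _) (fun u => F (u ∘ e)) S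
  rw [hΦ] at h
  simp only [Function.comp_assoc, Equiv.symm_comp_self, Function.comp_id] at h
  exact h

section Cells

variable {a b : ℝ} {p q : ℕ}

def blockSimplex (a b : ℝ) (p q : ℕ) : Set (Fin p ⊕ Fin q → ℝ) :=
  {y | y ∘ Sum.inl ∈ orderedSimplex a b p ∧ y ∘ Sum.inr ∈ orderedSimplex a b q}

def shuffleCell (a b : ℝ) {A : Finset (Fin (p + q))} (hA : #A = p) :
    Set (Fin p ⊕ Fin q → ℝ) :=
  {y | y ∘ (shuffleEquiv hA).symm ∈ orderedSimplex a b (p + q)}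

lemma blockSimplex_subset_pi_Ioo : blockSimplex a b p q ⊆ Set.univ.pi fun _ => Set.Ioo a b := by
  rintro y ⟨hl, hr⟩ (i | j) -
  exacts [hl.1 i, hr.1 j]

lemma integral_orderedSimplex_mul_integral_orderedSimplex (F : (Fin p → ℝ) → ℝ)
    (G : (Fin q → ℝ) → ℝ) :
    (∫ s in orderedSimplex a b p, F s) * (∫ t in orderedSimplex a b q, G t) =
      ∫ y in blockSimplex a b p q, F (y ∘ Sum.inl) * G (y ∘ Sum.inr) := by
  rw [← setIntegral_prod_mul, ← Measure.volume_eq_prod]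
  exact ((volume_measurePreserving_sumPiEquivProdPi fun _ : Fin p ⊕ Fin q => ℝ)
    |>.setIntegral_preimage_emb (MeasurableEquiv.measurableEmbedding _)
      (fun z => F z.1 * G z.2) _).symm

lemma shuffleCell_subset_blockSimplex {A : Finset (Fin (p + q))} (hA : #A = p) :
    shuffleCell a b hA ⊆ blockSimplex a b p q := fun y hy =>
  ⟨by simpa [Function.comp_def] using comp_mem_orderedSimplex hy (strictMono_shuffleEquiv_inl hA),
    by simpa [Function.comp_def] using comp_mem_orderedSimplex hy (strictMono_shuffleEquiv_inr hA)⟩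

lemma pairwise_disjoint_shuffleCell :
    Pairwise (Function.onFun Disjoint fun A : {A : Finset (Fin (p + q)) // #A = p} =>
      shuffleCell a b A.2) := by
  rintro ⟨A, hA⟩ ⟨B, hB⟩ hne
  refine Set.disjoint_left.mpr fun y hyA hyB => hne (Subtype.ext ?_)
  refine shuffleEquiv_injective hA hB ?_
  exact Equiv.symm_bijective.injective (eq_of_strictMono_comp hyA.2 hyB.2)

lemma exists_mem_shuffleCell {y : Fin p ⊕ Fin q → ℝ} (hy : y ∈ blockSimplex a b p q)
    (hinj : Function.Injective y) :
    ∃ A : {A : Finset (Fin (p + q)) // #A = p}, y ∈ shuffleCell a b A.2 := by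
  obtain ⟨σ, hσ⟩ := exists_equiv_strictMono_comp hinj
    (by simp : Fintype.card (Fin p ⊕ Fin q) = p + q)
  obtain ⟨A, hA, he⟩ := exists_eq_shuffleEquiv (strictMono_symm_comp hσ hy.1.2)
    (strictMono_symm_comp hσ hy.2.2)
  refine ⟨⟨A, hA⟩, fun _ => blockSimplex_subset_pi_Ioo hy _ trivial, ?_⟩
  show StrictMono (y ∘ (shuffleEquiv hA).symm)
  rwa [← he, Equiv.symm_symm]

lemma blockSimplex_ae_eq_iUnion_shuffleCell :
    blockSimplex a b p q =ᵐ[volume] ⋃ A : {A : Finset (Fin (p + q)) // #A = p},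
      shuffleCell a b A.2 := by
  refine ae_eq_set.mpr ⟨measure_mono_null ?_ (volume_setOf_not_injective _), ?_⟩
  · rintro y ⟨hy, hyA⟩ hinj
    obtain ⟨A, hA⟩ := exists_mem_shuffleCell hy hinj
    exact hyA (Set.mem_iUnion.mpr ⟨A, hA⟩)
  · rw [Set.sdiff_eq_empty.mpr (Set.iUnion_subset fun A => shuffleCell_subset_blockSimplex A.2),
      measure_empty]

end Cells

theorem integral_orderedSimplex_mul_eq_sum_shuffle {a b : ℝ} {p q : ℕ}
    (f : Fin p ⊕ Fin q → ℝ → ℝ) (hf : ∀ k, Continuous (f k)) :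
    (∫ s in orderedSimplex a b p, ∏ i, f (.inl i) (s i)) *
        (∫ t in orderedSimplex a b q, ∏ j, f (.inr j) (t j)) =
      ∑ A : {A : Finset (Fin (p + q)) // #A = p},
        ∫ u in orderedSimplex a b (p + q), ∏ m, f ((shuffleEquiv A.2).symm m) (u m) := by
  set F : (Fin p ⊕ Fin q → ℝ) → ℝ := fun y => ∏ k, f k (y k)
  have hF : Continuous F := continuous_finsetProd _ fun k _ => (hf k).comp (continuous_apply k)
  have hF_int : IntegrableOn F (blockSimplex a b p q) :=
    (hF.continuousOn.integrableOn_compact (isCompact_univ_pi fun _ => isCompact_Icc)).mono_set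
      ((blockSimplex_subset_pi_Ioo).trans (Set.pi_mono fun _ _ => Set.Ioo_subset_Icc_self))
  have hmeas : ∀ A : {A : Finset (Fin (p + q)) // #A = p}, MeasurableSet (shuffleCell a b A.2) :=
    fun A => ((isOpen_orderedSimplex a b _).preimage
      (continuous_pi fun _ => continuous_apply _)).measurableSet
  calc _ = ∫ y in blockSimplex a b p q, F y := by
        rw [integral_orderedSimplex_mul_integral_orderedSimplex]
        simp [F, Fintype.prod_sum_type]
    _ = ∑ A : {A : Finset (Fin (p + q)) // #A = p}, ∫ y in shuffleCell a b A.2, F y := by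
        rw [setIntegral_congr_set blockSimplex_ae_eq_iUnion_shuffleCell,
          integral_iUnion_fintype hmeas pairwise_disjoint_shuffleCell
            fun A => hF_int.mono_set (shuffleCell_subset_blockSimplex A.2)]
    _ = _ := sum_congr rfl fun A _ => by
        rw [shuffleCell, setIntegral_preimage_comp_equiv_symm]
        simp [F, ← (shuffleEquiv A.2).symm.prod_comp]

theorem sig_mul_sig {d p q : ℕ} {X : ℝ → Fin d → ℝ} (hX : ContDiff ℝ 1 X) (a b : ℝ)
    (I : Fin p → Fin d) (J : Fin q → Fin d) :
    sig X a b I * sig X a b J =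
      ∑ A : {A : Finset (Fin (p + q)) // #A = p}, sig X a b (interleave I J A.1 A.2) := by
  have hf : ∀ k, Continuous (deriv fun u => X u (Sum.elim I J k)) :=
    fun k => ((contDiff_pi.mp hX) _).continuous_deriv le_rfl
  simp only [sig, interleave_eq_comp_symm]
  exact integral_orderedSimplex_mul_eq_sum_shuffle _ hf

theorem stmt_3_general {d : ℕ} (X : ℝ → Fin d → ℝ) (hX : ContDiff ℝ 1 X)
    (𝕀 𝕁 : Finset (List (Fin d))) (v w : List (Fin d) → ℝ) :
    (∑ I ∈ 𝕀, v I * sigL X I) * (∑ J ∈ 𝕁, w J * sigL X J) =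
      ∑ I ∈ 𝕀, ∑ J ∈ 𝕁, v I * w J *
        ∑ A : {A : Finset (Fin (I.length + J.length)) // A.card = I.length},
          sig X 0 1 (interleave I.get J.get A.1 A.2) := by
  rw [sum_mul_sum]
  refine sum_congr rfl fun I _ => sum_congr rfl fun J _ => ?_
  rw [← sig_mul_sig hX 0 1 I.get J.get, sigL, sigL]
  ring

/-- finite linear combinations of iterated integrals are closed under
pointwise multiplication, with the product given explicitly by the shuffle
(interleaving) formula:
`f(X)·g(X) = Σ_{I,J} v_I w_J Σ_{A ⊆ {1,…,p+q}, |A|=p} S^{(w_A)}(X)`. -/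
theorem stmt_3 {d : ℕ} (hd : 1 ≤ d) (X : ℝ → Fin d → ℝ) (hX : ContDiff ℝ 1 X)
    (𝕀 𝕁 : Finset (List (Fin d))) (v w : List (Fin d) → ℝ) :
    (∑ I ∈ 𝕀, v I * sigL X I) * (∑ J ∈ 𝕁, w J * sigL X J) =
      ∑ I ∈ 𝕀, ∑ J ∈ 𝕁, v I * w J *
        ∑ A : {A : Finset (Fin (I.length + J.length)) // A.card = I.length},
          sig X 0 1 (interleave I.get J.get A.1 A.2) :=
  stmt_3_general X hX 𝕀 𝕁 v w
end

section
/- Let d ≥ 1, k ≥ 1, and let X : [0,t] → ℝ^d (t > 0) be a continuously differentiable path with length ℓ = ∫₀ᵗ ‖X'(u)‖ du, where ‖·‖ is the Euclidean norm on ℝ^d. Then the Euclidean norm of the k-th level of iterated integrals of X is bounded by ℓ^k / k!, i.e. ( Σ_{i₁,…,i_k = 1}^{d} ( S^{(i₁⋯i_k)}_{[0,t]}(X) )² )^{1/2} ≤ ℓ^k / k!. -/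
open MeasureTheory

/-!
The integrand of the `k`-th level is the tensor `X'(u₁) ⊗ ⋯ ⊗ X'(u_k)`, whose Euclidean norm is
`∏ ‖X'(uᵢ)‖`, so the norm of the level is at most the integral of `∏ ‖X'(uᵢ)‖` over the ordered
simplex `Δ`. The `k!` images of `Δ` under permutations of the coordinates are disjoint, lie in the
cube `[0,t]^k` and carry the same integral of this symmetric integrand, whose integral over the
cube is `ℓ^k` by Fubini.
-/

open Set Function

lemma measurableSet_orderedSimplex (a b : ℝ) (n : ℕ) :
    MeasurableSet (orderedSimplex a b n) := by
  simp only [orderedSimplex, ofPred_and, ofPred_forall]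
  measurability

lemma orderedSimplex_subset_Icc (a b : ℝ) (n : ℕ) :
    orderedSimplex a b n ⊆ Icc (fun _ => a) (fun _ => b) :=
  fun _ hx => ⟨fun i => (hx.1 i).1.le, fun i => (hx.1 i).2.le⟩

lemma pairwise_disjoint_comp_perm_preimage_orderedSimplex (a b : ℝ) (n : ℕ) :
    Pairwise (Disjoint on fun σ : Equiv.Perm (Fin n) => (· ∘ σ) ⁻¹' orderedSimplex a b n) := by
  intro σ τ hστ
  refine disjoint_left.2 fun x hσ hτ => hστ ?_
  change x ∘ σ ∈ orderedSimplex a b n at hσ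
  change x ∘ τ ∈ orderedSimplex a b n at hτ
  have hrange : range (x ∘ σ) = range (x ∘ τ) := by
    simp only [range_comp, Equiv.range_eq_univ, image_univ]
  have hxστ : x ∘ σ = x ∘ τ := (StrictMono.range_inj hσ.2 hτ.2).1 hrange
  have hx : Injective x := (σ.injective_comp x).1 (StrictMono.injective hσ.2)
  exact Equiv.ext fun i => hx (congrFun hxστ i)

lemma MeasurableEquiv.coe_piCongrLeft_const {ι ι' β : Type*} [MeasurableSpace β]
    (e : ι' ≃ ι) : ⇑(MeasurableEquiv.piCongrLeft (fun _ => β) e) = (· ∘ e.symm) := by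
  ext x i
  simp [MeasurableEquiv.coe_piCongrLeft, Equiv.piCongrLeft_apply_eq_cast]

theorem factorial_mul_setIntegral_orderedSimplex_le {n : ℕ} {a b : ℝ} {g : (Fin n → ℝ) → ℝ}
    (hg : IntegrableOn g (Icc (fun _ => a) (fun _ => b)))
    (hg₀ : ∀ x ∈ Icc (fun _ => a) (fun _ => b), 0 ≤ g x)
    (hg_perm : ∀ (σ : Equiv.Perm (Fin n)) x, g (x ∘ σ) = g x) :
    n.factorial * ∫ x in orderedSimplex a b n, g x ≤
      ∫ x in Icc (fun _ => a) (fun _ => b), g x := by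
  set S := orderedSimplex a b n
  set C : Set (Fin n → ℝ) := Icc (fun _ => a) (fun _ => b)
  let T (σ : Equiv.Perm (Fin n)) := MeasurableEquiv.piCongrLeft (fun _ => ℝ) σ.symm
  have hT (σ : Equiv.Perm (Fin n)) : ⇑(T σ) = (· ∘ σ) := by
    simp [T, MeasurableEquiv.coe_piCongrLeft_const]
  have hTC (σ : Equiv.Perm (Fin n)) : T σ ⁻¹' S ⊆ C := fun x hx => by
    rw [mem_preimage, hT] at hx
    have hxσ : x ∘ σ ∈ C := orderedSimplex_subset_Icc a b n hx
    exact ⟨fun i => by simpa using hxσ.1 (σ.symm i), fun i => by simpa using hxσ.2 (σ.symm i)⟩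
  have hTS (σ : Equiv.Perm (Fin n)) : ∫ x in T σ ⁻¹' S, g x = ∫ x in S, g x := by
    calc ∫ x in T σ ⁻¹' S, g x = ∫ x in T σ ⁻¹' S, g (T σ x) := by simp only [hT, hg_perm]
      _ = ∫ x in S, g x := (volume_measurePreserving_piCongrLeft _ σ.symm).setIntegral_preimage_emb
            (T σ).measurableEmbedding g S
  have hdisj : Pairwise (Disjoint on fun σ => T σ ⁻¹' S) := by
    simpa only [hT] using pairwise_disjoint_comp_perm_preimage_orderedSimplex a b n
  calc n.factorial * ∫ x in S, g x = ∑ σ : Equiv.Perm (Fin n), ∫ x in T σ ⁻¹' S, g x := by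
        simp [hTS, Fintype.card_perm]
    _ = ∫ x in ⋃ σ, T σ ⁻¹' S, g x :=
        (integral_iUnion_fintype (fun σ => (T σ).measurable (measurableSet_orderedSimplex a b n))
          hdisj fun σ => hg.mono_set (hTC σ)).symm
    _ ≤ ∫ x in C, g x :=
        setIntegral_mono_set hg ((ae_restrict_iff' measurableSet_Icc).2 (.of_forall hg₀))
          (iUnion_subset hTC).eventuallyLE

lemma integrableOn_Icc_prod {ι : Type*} [Fintype ι] {a b : ℝ} {h : ℝ → ℝ}
    (hh : IntegrableOn h (Icc a b)) :
    IntegrableOn (fun x : ι → ℝ => ∏ i, h (x i)) (Icc (fun _ => a) (fun _ => b)) := by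
  rw [IntegrableOn, ← pi_univ_Icc, volume_pi, Measure.restrict_pi_pi]
  exact Integrable.fintype_prod fun _ => hh

lemma setIntegral_Icc_prod_eq_pow {ι : Type*} [Fintype ι] (a b : ℝ) (h : ℝ → ℝ) :
    ∫ x in Icc (fun _ : ι => a) (fun _ => b), ∏ i, h (x i) =
      (∫ u in Icc a b, h u) ^ Fintype.card ι := by
  rw [← pi_univ_Icc, volume_pi, Measure.restrict_pi_pi, integral_fintype_prod_eq_pow]

theorem setIntegral_orderedSimplex_prod_le {n : ℕ} {a b : ℝ} {h : ℝ → ℝ}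
    (hh : IntegrableOn h (Icc a b)) (hh₀ : ∀ u ∈ Icc a b, 0 ≤ h u) :
    ∫ x in orderedSimplex a b n, ∏ i, h (x i) ≤ (∫ u in Icc a b, h u) ^ n / n.factorial := by
  rw [le_div_iff₀' (by positivity), ← Fintype.card_fin n, ← setIntegral_Icc_prod_eq_pow,
    Fintype.card_fin]
  refine factorial_mul_setIntegral_orderedSimplex_le (integrableOn_Icc_prod hh)
    (fun x hx => Finset.prod_nonneg fun i _ => hh₀ _ ⟨hx.1 i, hx.2 i⟩) fun σ x => ?_
  exact Equiv.prod_comp σ fun i => h (x i)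

lemma EuclideanSpace.norm_toLp_prod_apply {ι κ : Type*} [Fintype ι] [DecidableEq ι] [Fintype κ]
    (v : ι → EuclideanSpace ℝ κ) :
    ‖WithLp.toLp 2 (fun j : ι → κ => ∏ i, v i (j i))‖ = ∏ i, ‖v i‖ := by
  rw [← sq_eq_sq₀ (norm_nonneg _) (Finset.prod_nonneg fun i _ => norm_nonneg _),
    EuclideanSpace.real_norm_sq_eq, ← Finset.prod_pow]
  simp_rw [EuclideanSpace.real_norm_sq_eq, Finset.prod_univ_sum, Fintype.piFinset_univ,
    ← Finset.prod_pow]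

lemma EuclideanSpace.deriv_apply {κ : Type*} [Fintype κ] {X : ℝ → EuclideanSpace ℝ κ} {u : ℝ}
    (hX : DifferentiableAt ℝ X u) (j : κ) : deriv (fun v => X v j) u = deriv X u j := by
  simpa [comp_def] using
    ((EuclideanSpace.proj j).hasFDerivAt.comp_hasDerivAt u hX.hasDerivAt).deriv

lemma sig_eq_setIntegral_prod_deriv_apply {d n : ℕ} {X : ℝ → EuclideanSpace ℝ (Fin d)}
    (hX : Differentiable ℝ X) (a b : ℝ) (idx : Fin n → Fin d) :
    sig (fun u i => X u i) a b idx =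
      ∫ x in orderedSimplex a b n, ∏ i, deriv X (x i) (idx i) := by
  simp only [sig, EuclideanSpace.deriv_apply (hX _)]

theorem sqrt_sum_sig_sq_le {d n : ℕ} {X : ℝ → EuclideanSpace ℝ (Fin d)} (hX : ContDiff ℝ 1 X)
    (a b : ℝ) :
    √(∑ idx : Fin n → Fin d, sig (fun u i => X u i) a b idx ^ 2) ≤
      ∫ x in orderedSimplex a b n, ∏ i, ‖deriv X (x i)‖ := by
  have hX' : Continuous (deriv X) := hX.continuous_deriv le_rfl
  let F (x : Fin n → ℝ) : EuclideanSpace ℝ (Fin n → Fin d) :=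
    WithLp.toLp 2 fun idx => ∏ i, deriv X (x i) (idx i)
  have hF : IntegrableOn F (orderedSimplex a b n) :=
    ((by fun_prop : Continuous F).continuousOn.integrableOn_compact isCompact_Icc).mono_set
      (orderedSimplex_subset_Icc a b n)
  have hsig (idx : Fin n → Fin d) :
      sig (fun u i => X u i) a b idx = (∫ x in orderedSimplex a b n, F x) idx := by
    rw [sig_eq_setIntegral_prod_deriv_apply (hX.differentiable one_ne_zero),
      eval_integral_piLp hF.eval_piLp]
  calc √(∑ idx, sig (fun u i => X u i) a b idx ^ 2) = ‖∫ x in orderedSimplex a b n, F x‖ := by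
        simp only [hsig, EuclideanSpace.norm_eq, Real.norm_eq_abs, sq_abs]
    _ ≤ ∫ x in orderedSimplex a b n, ‖F x‖ := norm_integral_le_integral_norm F
    _ = ∫ x in orderedSimplex a b n, ∏ i, ‖deriv X (x i)‖ := by
        simp only [F, EuclideanSpace.norm_toLp_prod_apply]

theorem stmt_4_general {d k : ℕ} (t : ℝ) (ht : 0 < t)
    (X : ℝ → EuclideanSpace ℝ (Fin d)) (hX : ContDiff ℝ 1 X)
    (ℓ : ℝ) (hℓ : ℓ = ∫ u in (0:ℝ)..t, ‖deriv X u‖) :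
    Real.sqrt (∑ idx : Fin k → Fin d, (sig (fun u i => X u i) 0 t idx) ^ 2) ≤
      ℓ ^ k / (k.factorial : ℝ) := by
  have hℓ_Icc : ℓ = ∫ u in Icc 0 t, ‖deriv X u‖ := by
    rw [hℓ, intervalIntegral.integral_of_le ht.le, integral_Icc_eq_integral_Ioc]
  have hX' : Continuous (deriv X) := hX.continuous_deriv le_rfl
  calc √(∑ idx : Fin k → Fin d, sig (fun u i => X u i) 0 t idx ^ 2)
      ≤ ∫ x in orderedSimplex 0 t k, ∏ i, ‖deriv X (x i)‖ := sqrt_sum_sig_sq_le hX 0 t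
    _ ≤ ℓ ^ k / k.factorial := hℓ_Icc ▸
        setIntegral_orderedSimplex_prod_le hX'.norm.integrableOn_Icc fun _ _ => norm_nonneg _

/-- the Euclidean (Frobenius) norm of the `k`-th level of iterated
integrals of a continuously differentiable path `X : [0,t] → ℝ^d` of length
`ℓ = ∫₀ᵗ ‖X'(u)‖ du` is bounded by `ℓ^k / k!`. -/
theorem stmt_4 {d k : ℕ} (hd : 1 ≤ d) (hk : 1 ≤ k) (t : ℝ) (ht : 0 < t)
    (X : ℝ → EuclideanSpace ℝ (Fin d)) (hX : ContDiff ℝ 1 X)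
    (ℓ : ℝ) (hℓ : ℓ = ∫ u in (0:ℝ)..t, ‖deriv X u‖) :
    Real.sqrt (∑ idx : Fin k → Fin d, (sig (fun u i => X u i) 0 t idx) ^ 2) ≤
      ℓ ^ k / (k.factorial : ℝ) :=
  stmt_4_general t ht X hX ℓ hℓ
end
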